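/- Let I be a (full-supported) matroidal ideal of degree d in R = k[x_1,...,x_n], and let x, y be two variables of R such that xy does not divide u for every u in the minimal monomial generating set G(I). If xu ∈ G(I) for some monomial u of degree d−1, then yu ∈ G(I). -/

import Mathlib

/-!
Write `t = y·u`. By full support some minimal generator `b` is divisible by `y`; among all such
`b` choose one with `b / gcd(b, t)` of least degree. If `b ≠ t`, pick `x_i ∣ b` with `x_i ∤ t`
and exchange `b` against `x·u`: it yields `b' = x_j b / x_i ∈ I` with `x_j ∣ x·u`, `x_j ∤ b`.
Here `x_j ≠ y` because `y ∤ x·u`, and `x_j ≠ x` because `xy ∤ b'`; so `x_j ∣ u ∣ t`, and `b'`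
is a minimal generator divisible by `y` and strictly closer to `t`, a contradiction.
-/

open MvPolynomial

namespace PaperDefs

variable {k : Type*} [Field k] {n : ℕ}

/-- The total degree of an exponent vector. -/
def edeg (a : Fin n →₀ ℕ) : ℕ := ∑ i, a i

/-- `I` is a monomial ideal: it is generated by a set of monomials. -/
def IsMonomialIdeal (I : Ideal (MvPolynomial (Fin n) k)) : Prop :=
  ∃ S : Set (Fin n →₀ ℕ),
    I = Ideal.span ((fun a => (MvPolynomial.monomial a (1 : k))) '' S)

/-- The (exponent vectors of the) unique minimal monomial generating set `G(I)`:
monomials of `I` that are minimal with respect to divisibility. -/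
def minGens (I : Ideal (MvPolynomial (Fin n) k)) : Set (Fin n →₀ ℕ) :=
  {a | (MvPolynomial.monomial a (1 : k)) ∈ I ∧
    ∀ b : Fin n →₀ ℕ, b < a → (MvPolynomial.monomial b (1 : k)) ∉ I}

/-- A squarefree exponent vector. -/
def SqFree (a : Fin n →₀ ℕ) : Prop := ∀ i, a i ≤ 1

/-- `I` is a polymatroidal ideal of degree `d`. -/
def IsPolymatroidal (I : Ideal (MvPolynomial (Fin n) k)) (d : ℕ) : Prop :=
  IsMonomialIdeal I ∧ I ≠ ⊥ ∧
  (∀ a ∈ minGens I, edeg a = d) ∧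
  ∀ a ∈ minGens I, ∀ b ∈ minGens I, ∀ i : Fin n, b i < a i →
    ∃ j : Fin n, a j < b j ∧
      (MvPolynomial.monomial (a - Finsupp.single i 1 + Finsupp.single j 1) (1 : k)) ∈ I

/-- `I` is a matroidal ideal of degree `d`: a squarefree polymatroidal ideal. -/
def IsMatroidal (I : Ideal (MvPolynomial (Fin n) k)) (d : ℕ) : Prop :=
  IsPolymatroidal I d ∧ ∀ a ∈ minGens I, SqFree a

/-- `I` is full-supported: every variable divides some minimal generator. -/
def FullSupported (I : Ideal (MvPolynomial (Fin n) k)) : Prop :=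
  ∀ i : Fin n, ∃ a ∈ minGens I, a i ≠ 0

/-- The maximal graded ideal `(x_1, ..., x_n)`. -/
noncomputable def varIdeal (k : Type*) [Field k] (n : ℕ) : Ideal (MvPolynomial (Fin n) k) :=
  Ideal.span (Set.range MvPolynomial.X)

/-- The colon ideal `(I : x_i)`. -/
noncomputable def colonVar (I : Ideal (MvPolynomial (Fin n) k)) (i : Fin n) :
    Ideal (MvPolynomial (Fin n) k) :=
  I.colon ((Ideal.span {MvPolynomial.X i} : Ideal (MvPolynomial (Fin n) k)) : Set (MvPolynomial (Fin n) k))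

/-- The height of an ideal: the infimum of `Order.height` over the primes containing it. -/
noncomputable def ht {R : Type*} [CommRing R] (I : Ideal R) : ℕ∞ :=
  ⨅ (p : PrimeSpectrum R) (_ : I ≤ p.asIdeal), Order.height p

/-- `I` is unmixed: all associated primes of `R/I` have the same height. -/
def IsUnmixed (I : Ideal (MvPolynomial (Fin n) k)) : Prop :=
  ∀ p ∈ associatedPrimes (MvPolynomial (Fin n) k) (MvPolynomial (Fin n) k ⧸ I),
    ∀ q ∈ associatedPrimes (MvPolynomial (Fin n) k) (MvPolynomial (Fin n) k ⧸ I),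
      ht p = ht q

/-- The arithmetical rank of `I`. -/
noncomputable def ara (I : Ideal (MvPolynomial (Fin n) k)) : ℕ :=
  sInf {t : ℕ | ∃ f : Fin t → MvPolynomial (Fin n) k,
    (Ideal.span (Set.range f)).radical = I.radical}

/-- The squarefree Veronese ideal of degree `d`. -/
noncomputable def sqfreeVeronese (k : Type*) [Field k] (n d : ℕ) : Ideal (MvPolynomial (Fin n) k) :=
  Ideal.span ((fun s : Finset (Fin n) => ∏ i ∈ s, MvPolynomial.X i) ''
    {s : Finset (Fin n) | s.card = d})

/-- The depth of `R/I` : the supremum of lengths of `R/I`-regular sequences consisting of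
elements of the maximal graded ideal. -/
noncomputable def quotDepth (I : Ideal (MvPolynomial (Fin n) k)) : ℕ :=
  sSup {r : ℕ | ∃ rs : List (MvPolynomial (Fin n) k), rs.length = r ∧
    (∀ x ∈ rs, x ∈ varIdeal k n) ∧
    RingTheory.Sequence.IsRegular (MvPolynomial (Fin n) k ⧸ I) rs}

/-- `R/I` is Cohen–Macaulay: the depth of `R/I` equals its Krull dimension. -/
def IsCohenMacaulayQuot (I : Ideal (MvPolynomial (Fin n) k)) : Prop :=
  (quotDepth I : WithBot ℕ∞) = ringKrullDim (MvPolynomial (Fin n) k ⧸ I)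

end PaperDefs

namespace PaperDefs

variable {k : Type*} [Field k] {n : ℕ}

theorem edeg_eq_degree (a : Fin n →₀ ℕ) : edeg a = a.degree :=
  (Finsupp.degree_eq_sum a).symm

theorem edeg_add (a b : Fin n →₀ ℕ) : edeg (a + b) = edeg a + edeg b := by
  simp only [edeg_eq_degree, map_add]

theorem edeg_single (i : Fin n) (m : ℕ) : edeg (Finsupp.single i m) = m := by
  rw [edeg_eq_degree, Finsupp.degree_single]

theorem edeg_lt_edeg {a b : Fin n →₀ ℕ} (h : a < b) : edeg a < edeg b := by
  obtain ⟨c, rfl⟩ := le_iff_exists_add.mp h.le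
  have hc : c ≠ 0 := by rintro rfl; simp at h
  rw [edeg_add, edeg_eq_degree c]
  have := mt (Finsupp.degree_eq_zero_iff c).mp hc
  omega

theorem eq_of_le_of_edeg_eq {a b : Fin n →₀ ℕ} (h : a ≤ b) (he : edeg a = edeg b) : a = b :=
  h.eq_or_lt.resolve_right fun hlt => (edeg_lt_edeg hlt).ne he

theorem edeg_exchange {b : Fin n →₀ ℕ} {i : Fin n} (hi : Finsupp.single i 1 ≤ b) (j : Fin n) :
    edeg (b - Finsupp.single i 1 + Finsupp.single j 1) = edeg b := by
  have h := edeg_add (b - Finsupp.single i 1) (Finsupp.single i 1)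
  rw [tsub_add_cancel_of_le hi, edeg_single] at h
  rw [edeg_add, edeg_single]
  omega

theorem single_add_single_le {p q : Fin n} (hpq : p ≠ q) {c : Fin n →₀ ℕ}
    (hp : c p ≠ 0) (hq : c q ≠ 0) : Finsupp.single p 1 + Finsupp.single q 1 ≤ c := by
  intro m
  simp only [Finsupp.add_apply, Finsupp.single_apply]
  split_ifs <;> subst_vars <;> simp_all <;> omega

theorem exists_mem_minGens_le {I : Ideal (MvPolynomial (Fin n) k)} {b : Fin n →₀ ℕ}
    (hb : monomial b (1 : k) ∈ I) : ∃ m ∈ minGens I, m ≤ b := by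
  obtain ⟨m, ⟨hmb, hm⟩, hmin⟩ := WellFounded.has_min wellFounded_lt
    {c | c ≤ b ∧ monomial c (1 : k) ∈ I} ⟨b, le_rfl, hb⟩
  exact ⟨m, ⟨hm, fun c hcm hc => hmin c ⟨hcm.le.trans hmb, hc⟩ hcm⟩, hmb⟩

theorem mem_minGens_of_edeg_eq {I : Ideal (MvPolynomial (Fin n) k)} {d : ℕ}
    (hdeg : ∀ a ∈ minGens I, edeg a = d) {c : Fin n →₀ ℕ}
    (hc : monomial c (1 : k) ∈ I) (hcd : edeg c = d) : c ∈ minGens I := by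
  refine ⟨hc, fun b hbc hb => ?_⟩
  obtain ⟨m, hm, hmb⟩ := exists_mem_minGens_le hb
  exact (edeg_lt_edeg (hmb.trans_lt hbc)).ne (by rw [hdeg m hm, hcd])

theorem edeg_exchange_tsub_lt {b t : Fin n →₀ ℕ} {i j : Fin n} (hi : t i < b i) (hj : b j < t j) :
    edeg (b - Finsupp.single i 1 + Finsupp.single j 1 - t) < edeg (b - t) := by
  have hji : j ≠ i := by rintro rfl; omega
  refine edeg_lt_edeg (lt_of_le_of_ne (fun m => ?_) fun h => ?_)
  · simp only [Finsupp.tsub_apply, Finsupp.add_apply, Finsupp.single_apply]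
    split_ifs <;> subst_vars <;> omega
  · have hi' := DFunLike.congr_fun h i
    simp only [Finsupp.tsub_apply, Finsupp.add_apply, Finsupp.single_apply, if_pos,
      if_neg hji] at hi'
    omega

theorem exists_mem_minGens_closer {I : Ideal (MvPolynomial (Fin n) k)} {d : ℕ}
    (hI : IsMatroidal I d) {p q : Fin n} (hpq : p ≠ q)
    (hdvd : ∀ a ∈ minGens I, ¬ (Finsupp.single p 1 + Finsupp.single q 1 ≤ a))
    {u : Fin n →₀ ℕ} (hxu : Finsupp.single p 1 + u ∈ minGens I)
    {b : Fin n →₀ ℕ} (hb : b ∈ minGens I) (hbq : b q ≠ 0)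
    (hbt : b ≠ Finsupp.single q 1 + u) :
    ∃ b' ∈ minGens I, b' q ≠ 0 ∧
      edeg (b' - (Finsupp.single q 1 + u)) < edeg (b - (Finsupp.single q 1 + u)) := by
  obtain ⟨⟨-, -, hdeg, hexch⟩, hsf⟩ := hI
  set a := Finsupp.single p 1 + u
  set t := Finsupp.single q 1 + u
  have hap : a p = 1 := le_antisymm (hsf a hxu p) (by simp [a])
  have hup : u p = 0 := by simpa [a] using hap
  have huq : u q = 0 := by
    by_contra h
    exact hdvd a hxu (single_add_single_le hpq (by omega) (by simpa [a, hpq] using h))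
  obtain ⟨i, hti⟩ : ∃ i, t i < b i := by
    by_contra! h
    refine hbt (eq_of_le_of_edeg_eq h ?_)
    rw [hdeg b hb, ← hdeg a hxu]
    simp only [a, t, edeg_add, edeg_single]
  have hbi : b i = 1 := by have := hsf b hb i; omega
  have hiq : i ≠ q := by
    rintro rfl
    simp only [t, Finsupp.coe_add, Pi.add_apply, Finsupp.single_eq_same] at hti
    omega
  have hui : u i = 0 := by simpa [t, hiq.symm] using (by omega : t i = 0)
  have hip : i ≠ p := by
    rintro rfl
    exact hdvd b hb (single_add_single_le hpq (by omega) hbq)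
  obtain ⟨j, hj, hmem⟩ := hexch b hb a hxu i (by simp [a, hip.symm, hui, hbi])
  have haj : a j = 1 := by have := hsf a hxu j; omega
  have hjq : j ≠ q := by rintro rfl; simp [a, hpq, huq] at haj
  set b' := b - Finsupp.single i 1 + Finsupp.single j 1
  have hb'q : b' q = b q := by simp [b', hiq.symm, hjq.symm]
  have hsi : Finsupp.single i 1 ≤ b := Finsupp.single_le_iff.mpr (by omega)
  have hb' : b' ∈ minGens I :=
    mem_minGens_of_edeg_eq hdeg hmem (by rw [edeg_exchange hsi, hdeg b hb])
  have hjp : j ≠ p := by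
    rintro rfl
    exact hdvd b' hb' (single_add_single_le hpq (by simp [b', hip.symm]) (by omega))
  have htj : t j = 1 := by simpa [a, t, hjp.symm, hjq.symm] using haj
  exact ⟨b', hb', hb'q ▸ hbq, edeg_exchange_tsub_lt hti (by omega)⟩

end PaperDefs

open PaperDefs in
theorem statement1_general {k : Type*} [Field k] {n d : ℕ}
    (I : Ideal (MvPolynomial (Fin n) k))
    (hI : IsMatroidal I d) (hfull : FullSupported I)
    (p q : Fin n) (hpq : p ≠ q)
    (hdvd : ∀ a ∈ minGens I, ¬ (Finsupp.single p 1 + Finsupp.single q 1 ≤ a))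
    (u : Fin n →₀ ℕ)
    (hxu : Finsupp.single p 1 + u ∈ minGens I) :
    Finsupp.single q 1 + u ∈ minGens I := by
  obtain ⟨b, hb, hbq⟩ := hfull q
  induction hN : edeg (b - (Finsupp.single q 1 + u)) using Nat.strong_induction_on
    generalizing b with
  | _ N ih =>
    by_cases hbt : b = Finsupp.single q 1 + u
    · exact hbt ▸ hb
    obtain ⟨b', hb', hb'q, hlt⟩ := exists_mem_minGens_closer hI hpq hdvd hxu hb hbq hbt
    exact ih _ (hN ▸ hlt) b' hb' hb'q rfl

open PaperDefs in
/-- Lemma 1.1, second part. If `I` is a full-supported matroidal ideal of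
degree `d`, `x, y` are two variables such that `xy` divides no minimal generator of `I`,
and `x·u ∈ G(I)` for some monomial `u` of degree `d - 1`, then `y·u ∈ G(I)`. -/
theorem statement1 {k : Type*} [Field k] {n d : ℕ}
    (I : Ideal (MvPolynomial (Fin n) k))
    (hI : IsMatroidal I d) (hfull : FullSupported I)
    (p q : Fin n) (hpq : p ≠ q)
    (hdvd : ∀ a ∈ minGens I, ¬ (Finsupp.single p 1 + Finsupp.single q 1 ≤ a))
    (u : Fin n →₀ ℕ) (hu : edeg u = d - 1)
    (hxu : Finsupp.single p 1 + u ∈ minGens I) :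
    Finsupp.single q 1 + u ∈ minGens I :=
  statement1_general I hI hfull p q hpq hdvd u hxu
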